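/- Under the exact (continuous-time) flow ġ = -(g + V + W p + c(t)) with gᵢ = φᵢ(pᵢ) for a family of strictly increasing differentiable reparameterizations φᵢ with φᵢ'(pᵢ) = Mᵢ(pᵢ) > 0, and c(t) chosen so that ∑ pᵢ(t) = 1 for all t, the free energy F(p(t)) is nonincreasing in t whenever ∇F(p) = φ(p) + V + W p componentwise; moreover dF/dt = -∑ᵢ (∂F/∂pᵢ + c)²/Mᵢ(pᵢ) ≤ 0. -/

import Mathlib

/-!
Along the flow, `gᵢ = φᵢ(pᵢ)` moves with velocity `-(∂ᵢF + c)`, so by the chain rule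
`ṗᵢ = -(∂ᵢF + c) / Mᵢ(pᵢ)`. Conservation of mass gives `∑ ṗᵢ = 0`, so the multiplier `c` drops
out of `dF/dt = ∑ ∂ᵢF ṗᵢ = ∑ (∂ᵢF + c) ṗᵢ = -∑ (∂ᵢF + c)² / Mᵢ ≤ 0`.
-/

open Finset

lemma HasDerivAt.of_comp_of_ne_zero {φ x : ℝ → ℝ} {m v t : ℝ} (hφ : HasDerivAt φ m (x t))
    (hm : m ≠ 0) (hx : DifferentiableAt ℝ x t) (hcomp : HasDerivAt (fun s => φ (x s)) v t) :
    HasDerivAt x (v / m) t := by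
  rw [hcomp.unique (hφ.comp t hx.hasDerivAt), mul_div_cancel_left₀ _ hm]
  exact hx.hasDerivAt

lemma sum_eq_zero_of_hasDerivAt_of_sum_eq_const {ι : Type*} [Fintype ι] {p : ℝ → ι → ℝ}
    {d : ι → ℝ} {C t : ℝ} (hsum : ∀ s, ∑ i, p s i = C)
    (hd : ∀ i, HasDerivAt (fun s => p s i) (d i) t) : ∑ i, d i = 0 :=
  (HasDerivAt.fun_sum fun i _ => hd i).unique (by simpa only [hsum] using hasDerivAt_const t C)

lemma DifferentiableAt.hasDerivAt_comp_of_hasDerivAt_apply {ι : Type*} [Fintype ι]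
    [DecidableEq ι] {F : (ι → ℝ) → ℝ} {p : ℝ → ι → ℝ} {d : ι → ℝ} {t : ℝ}
    (hF : DifferentiableAt ℝ F (p t)) (hd : ∀ i, HasDerivAt (fun s => p s i) (d i) t) :
    HasDerivAt (fun s => F (p s)) (∑ i, d i * fderiv ℝ F (p t) (Pi.single i 1)) t := by
  have hdecomp : fderiv ℝ F (p t) d = ∑ i, d i * fderiv ℝ F (p t) (Pi.single i 1) := by
    simp only [← smul_eq_mul, ← map_smul, ← map_sum, ← pi_eq_sum_univ']
  rw [← hdecomp]
  exact hF.hasFDerivAt.comp_hasDerivAt t (hasDerivAt_pi.2 hd)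

lemma sum_neg_div_mul_sub_of_sum_neg_div_eq_zero {ι : Type*} [Fintype ι] (g M : ι → ℝ) (c : ℝ)
    (hsum : ∑ i, -g i / M i = 0) :
    ∑ i, -g i / M i * (g i - c) = -∑ i, g i ^ 2 / M i := by
  have hterm : ∀ i, -g i / M i * (g i - c) = -(g i ^ 2 / M i) - c * (-g i / M i) :=
    fun i => by ring
  simp only [hterm, sum_sub_distrib, ← mul_sum, hsum, mul_zero, sub_zero, sum_neg_distrib]

theorem free_energy_decreases_along_flow (n : ℕ) (V : Fin n → ℝ)
    (W : Matrix (Fin n) (Fin n) ℝ)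
    (φ M : Fin n → ℝ → ℝ)
    (hφ : ∀ i x, HasDerivAt (φ i) (M i x) x) (hM : ∀ i x, 0 < M i x)
    (F : (Fin n → ℝ) → ℝ) (hFdiff : Differentiable ℝ F)
    (hgrad : ∀ q : Fin n → ℝ, (∀ i, 0 < q i) → ∀ i,
      fderiv ℝ F q (Pi.single i 1) = φ i (q i) + V i + ∑ j, W i j * q j)
    (p : ℝ → Fin n → ℝ) (c : ℝ → ℝ)
    (hp : ∀ t i, 0 < p t i)
    (hpdiff : ∀ t i, DifferentiableAt ℝ (fun s => p s i) t)
    (hnorm : ∀ t, ∑ i, p t i = 1)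
    (hflow : ∀ t i, HasDerivAt (fun s => φ i (p s i))
      (-(φ i (p t i) + V i + (∑ j, W i j * p t j) + c t)) t) :
    (∀ t, HasDerivAt (fun s => F (p s))
      (-(∑ i, (φ i (p t i) + V i + (∑ j, W i j * p t j) + c t) ^ 2 / M i (p t i))) t) ∧
    (∀ t, -(∑ i, (φ i (p t i) + V i + (∑ j, W i j * p t j) + c t) ^ 2 / M i (p t i)) ≤ 0) ∧
    (∀ s t, s ≤ t → F (p t) ≤ F (p s)) := by
  set G : ℝ → Fin n → ℝ := fun t i => φ i (p t i) + V i + (∑ j, W i j * p t j) + c t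
  have hvel : ∀ t i, HasDerivAt (fun s => p s i) (-G t i / M i (p t i)) t := fun t i =>
    (hφ i (p t i)).of_comp_of_ne_zero (hM i _).ne' (hpdiff t i) (hflow t i)
  have hpartial : ∀ t i, fderiv ℝ F (p t) (Pi.single i 1) = G t i - c t := fun t i => by
    rw [hgrad (p t) (hp t)]
    ring
  have hdecay : ∀ t, HasDerivAt (fun s => F (p s)) (-∑ i, G t i ^ 2 / M i (p t i)) t := by
    intro t
    have hchain := (hFdiff (p t)).hasDerivAt_comp_of_hasDerivAt_apply (hvel t)
    simp only [hpartial] at hchain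
    rwa [sum_neg_div_mul_sub_of_sum_neg_div_eq_zero _ _ _
      (sum_eq_zero_of_hasDerivAt_of_sum_eq_const hnorm (hvel t))] at hchain
  have hnonpos : ∀ t, -∑ i, G t i ^ 2 / M i (p t i) ≤ 0 := fun t =>
    neg_nonpos.2 (sum_nonneg fun i _ => div_nonneg (sq_nonneg _) (hM i _).le)
  exact ⟨hdecay, hnonpos, fun s t hst => antitone_of_hasDerivAt_nonpos hdecay hnonpos hst⟩
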